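/- Soundness of rule (R.CC1): let E be a quantum operation on H with dual E*, I the identity. Suppose for i = 1,…,m, quantum predicates Aᵢ, Bᵢ satisfy Aᵢ ⊑ E*(Bᵢ) + (I - E*(I)) (partial correctness), and a quantum predicate A satisfies A ⊑ I - E*(I) (abortion). If pᵢ ≥ 0 with Σᵢ pᵢ ≤ 1, then Σᵢ pᵢAᵢ + (1 - Σᵢ pᵢ)A ⊑ E*(Σᵢ pᵢBᵢ) + (I - E*(I)). -/

import Mathlib

open Matrix
open scoped ComplexOrder

/-
The right-hand side minus the left-hand side is, by linearity of `E*`, the combination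
`Σⱼ pⱼ (E*(Bⱼ) + (I - E*(I)) - Aⱼ) + (1 - Σⱼ pⱼ) (I - E*(I) - A)` of the hypotheses'
positive semidefinite gaps with nonnegative weights, hence positive semidefinite.
-/

section Combination

variable {ι R M : Type*} [CommRing R] [AddCommGroup M] [Module R M]

theorem LinearMap.map_sum_smul_add_sub_eq (Φ : M →ₗ[R] M) (s : Finset ι) (p : ι → R)
    (A B : ι → M) (A₀ D : M) :
    Φ (∑ j ∈ s, p j • B j) + D - (∑ j ∈ s, p j • A j + (1 - ∑ j ∈ s, p j) • A₀) =
      ∑ j ∈ s, p j • (Φ (B j) + D - A j) + (1 - ∑ j ∈ s, p j) • (D - A₀) := by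
  simp only [map_sum, map_smul, smul_sub, smul_add, Finset.sum_add_distrib,
    Finset.sum_sub_distrib, sub_smul, one_smul, Finset.sum_smul]
  abel

end Combination

namespace Matrix

variable {ι n : Type*}

/-- The dual `E*` of the quantum operation `ρ ↦ Σᵢ Eᵢ ρ Eᵢᴴ`. -/
def krausDual {R : Type*} [CommSemiring R] [StarRing R] [Fintype ι] [Fintype n]
    (E : ι → Matrix n n R) :
    Matrix n n R →ₗ[R] Matrix n n R where
  toFun B := ∑ i, (E i)ᴴ * B * E i
  map_add' B C := by simp only [Matrix.mul_add, Matrix.add_mul, Finset.sum_add_distrib]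
  map_smul' c B := by simp only [Matrix.mul_smul, Matrix.smul_mul, Finset.smul_sum,
    RingHom.id_apply]

theorem PosSemidef.sum_smul_add_smul {s : Finset ι} {p : ι → ℝ} (hp : ∀ j ∈ s, 0 ≤ p j)
    (hpsum : ∑ j ∈ s, p j ≤ 1) {X : ι → Matrix n n ℂ} (hX : ∀ j ∈ s, (X j).PosSemidef)
    {Y : Matrix n n ℂ} (hY : Y.PosSemidef) :
    (∑ j ∈ s, (p j : ℂ) • X j + ((1 - ∑ j ∈ s, p j : ℝ) : ℂ) • Y).PosSemidef :=
  (posSemidef_sum s fun j hj => (hX j hj).smul (Complex.zero_le_real.mpr (hp j hj))).add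
    (hY.smul (Complex.zero_le_real.mpr (sub_nonneg.mpr hpsum)))

end Matrix

theorem rule_CC1_sound_general {d k m : ℕ}
    (E : Fin k → Matrix (Fin d) (Fin d) ℂ)
    (A B : Fin m → Matrix (Fin d) (Fin d) ℂ) (A₀ : Matrix (Fin d) (Fin d) ℂ)
    (p : Fin m → ℝ) (hp : ∀ j, 0 ≤ p j) (hpsum : ∑ j, p j ≤ 1)
    (hcorrect : ∀ j,
      ((∑ i, (E i)ᴴ * B j * E i) +
        ((1 : Matrix (Fin d) (Fin d) ℂ) - ∑ i, (E i)ᴴ * E i) - A j).PosSemidef)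
    (habort : (((1 : Matrix (Fin d) (Fin d) ℂ) - ∑ i, (E i)ᴴ * E i) - A₀).PosSemidef) :
    ((∑ i, (E i)ᴴ * (∑ j, (p j : ℂ) • B j) * E i) +
      ((1 : Matrix (Fin d) (Fin d) ℂ) - ∑ i, (E i)ᴴ * E i)
      - ((∑ j, (p j : ℂ) • A j) + ((1 : ℂ) - (∑ j, p j : ℝ)) • A₀)).PosSemidef := by
  have hgap := PosSemidef.sum_smul_add_smul (fun j _ => hp j) hpsum (fun j _ => hcorrect j)
    habort
  push_cast at hgap ⊢
  convert hgap using 1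
  exact (krausDual E).map_sum_smul_add_sub_eq _ _ _ _ _ _

/-- Soundness of rule (R.CC1): given partial correctness
`Aᵢ ⊑ E*(Bᵢ) + (I - E*(I))` for all `i`, and an abortion predicate
`A ⊑ I - E*(I)`, for `pᵢ ≥ 0` with `Σᵢ pᵢ ≤ 1` it holds that
`Σᵢ pᵢAᵢ + (1 - Σᵢ pᵢ)A ⊑ E*(Σᵢ pᵢBᵢ) + (I - E*(I))`. -/
theorem rule_CC1_sound {d k m : ℕ}
    (E : Fin k → Matrix (Fin d) (Fin d) ℂ)
    (hE : ((1 : Matrix (Fin d) (Fin d) ℂ) - ∑ i, (E i)ᴴ * E i).PosSemidef)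
    (A B : Fin m → Matrix (Fin d) (Fin d) ℂ) (A₀ : Matrix (Fin d) (Fin d) ℂ)
    (hA : ∀ j, (A j).PosSemidef)
    (hA' : ∀ j, ((1 : Matrix (Fin d) (Fin d) ℂ) - A j).PosSemidef)
    (hB : ∀ j, (B j).PosSemidef)
    (hB' : ∀ j, ((1 : Matrix (Fin d) (Fin d) ℂ) - B j).PosSemidef)
    (hA₀ : A₀.PosSemidef) (hA₀' : ((1 : Matrix (Fin d) (Fin d) ℂ) - A₀).PosSemidef)
    (p : Fin m → ℝ) (hp : ∀ j, 0 ≤ p j) (hpsum : ∑ j, p j ≤ 1)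
    (hcorrect : ∀ j,
      ((∑ i, (E i)ᴴ * B j * E i) +
        ((1 : Matrix (Fin d) (Fin d) ℂ) - ∑ i, (E i)ᴴ * E i) - A j).PosSemidef)
    (habort : (((1 : Matrix (Fin d) (Fin d) ℂ) - ∑ i, (E i)ᴴ * E i) - A₀).PosSemidef) :
    ((∑ i, (E i)ᴴ * (∑ j, (p j : ℂ) • B j) * E i) +
      ((1 : Matrix (Fin d) (Fin d) ℂ) - ∑ i, (E i)ᴴ * E i)
      - ((∑ j, (p j : ℂ) • A j) + ((1 : ℂ) - (∑ j, p j : ℝ)) • A₀)).PosSemidef :=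
  rule_CC1_sound_general E A B A₀ p hp hpsum hcorrect habort
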